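/- arXiv:2303.10531 — 2 statements merged into one kernel-verified Lean document; each statement's English description precedes it below -/
import Mathlib

section
/- Let 1 < α < 2. The function ξ(θ) = ((1−θ)/(1−α)) · ln((1−θ)/(α−θ)), defined on the open interval (2−α, 1), satisfies ξ(θ) < ln 2 for all θ in (2−α,1), and sup ξ = ln 2, attained in the limit θ → (2−α)⁺. -/
/-!
With `s = (1 - θ) / (α - 1)` one has `ξ(θ) = s * log (1 + 1/s)`, and `θ ∈ (2 - α, 1)`
corresponds to `s ∈ (0, 1)`. Since `s * log (1 + 1/s)` is the reciprocal of the slope of `log`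
between `1` and `1 + 1/s`, strict concavity of `log` makes it strictly increasing in `s`, so
`ξ < 1 * log 2`, with equality approached as `θ → (2 - α)⁺`, i.e. `s → 1`.
-/

open Real Set Filter Topology

theorem csSup_image_eq_of_forall_le_of_tendsto {ι β : Type*} [ConditionallyCompleteLinearOrder β]
    [TopologicalSpace β] [OrderTopology β] {f : ι → β} {s : Set ι} {l : Filter ι} [l.NeBot]
    {c : β} (hs : s ∈ l) (hle : ∀ x ∈ s, f x ≤ c) (hf : Tendsto f l (𝓝 c)) :
    sSup (f '' s) = c :=
  (isLUB_of_mem_closure (forall_mem_image.2 hle)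
    (mem_closure_of_tendsto hf (eventually_of_mem hs fun _ hx => mem_image_of_mem f hx))).csSup_eq
    ((Filter.nonempty_of_mem hs).image f)

theorem strictMonoOn_mul_log_one_add_inv :
    StrictMonoOn (fun s : ℝ => s * log (1 + s⁻¹)) (Ioi 0) := by
  intro s (hs : 0 < s) t (ht : 0 < t) hst
  have hslope := strictConcaveOn_log_Ioi.secant_strict_mono (a := 1) (x := 1 + t⁻¹)
    (y := 1 + s⁻¹) (mem_Ioi.2 one_pos) (mem_Ioi.2 (by positivity))
    (mem_Ioi.2 (by positivity)) (by simp [ht.ne']) (by simp [hs.ne']) (by gcongr)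
  simpa only [log_one, sub_zero, add_sub_cancel_left, div_inv_eq_mul, mul_comm] using hslope

theorem mul_log_one_add_inv_lt_log_two {s : ℝ} (hs₀ : 0 < s) (hs₁ : s < 1) :
    s * log (1 + s⁻¹) < log 2 := by
  simpa [one_add_one_eq_two] using strictMonoOn_mul_log_one_add_inv hs₀ (mem_Ioi.2 one_pos) hs₁

theorem div_mul_log_div_eq_mul_log_one_add_inv {α θ : ℝ} (hα : α ≠ 1) (hθ : θ ≠ 1) :
    (1 - θ) / (1 - α) * log ((1 - θ) / (α - θ)) =
      (1 - θ) / (α - 1) * log (1 + ((1 - θ) / (α - 1))⁻¹) := by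
  have hα' : α - 1 ≠ 0 := sub_ne_zero.2 hα
  have hθ' : 1 - θ ≠ 0 := sub_ne_zero.2 hθ.symm
  have hratio : (α - θ) / (1 - θ) = 1 + ((1 - θ) / (α - 1))⁻¹ := by
    field_simp
    ring
  rw [← inv_div (α - θ), log_inv, hratio, ← neg_sub α 1, div_neg]
  ring

theorem xi_sup_ln_two_general (α : ℝ) (h1 : 1 < α) :
    (∀ θ ∈ Set.Ioo (2 - α) 1,
        ((1 - θ) / (1 - α)) * Real.log ((1 - θ) / (α - θ)) < Real.log 2) ∧
    sSup ((fun θ : ℝ => ((1 - θ) / (1 - α)) * Real.log ((1 - θ) / (α - θ))) ''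
        Set.Ioo (2 - α) 1) = Real.log 2 ∧
    Filter.Tendsto (fun θ : ℝ => ((1 - θ) / (1 - α)) * Real.log ((1 - θ) / (α - θ)))
      (nhdsWithin (2 - α) (Set.Ioi (2 - α))) (nhds (Real.log 2)) := by
  have hα : 0 < α - 1 := by linarith
  have hlt :
      ∀ θ ∈ Ioo (2 - α) 1, (1 - θ) / (1 - α) * log ((1 - θ) / (α - θ)) < log 2 := by
    rintro θ ⟨hθl, hθu⟩
    rw [div_mul_log_div_eq_mul_log_one_add_inv h1.ne' hθu.ne]
    exact mul_log_one_add_inv_lt_log_two (div_pos (by linarith) hα)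
      ((div_lt_one hα).2 (by linarith))
  have hcont : ContinuousAt (fun θ : ℝ => (1 - θ) / (1 - α) * log ((1 - θ) / (α - θ)))
      (2 - α) := by
    have hden : α - (2 - α) ≠ 0 := by linarith
    have hnum : (1 - (2 - α)) / (α - (2 - α)) ≠ 0 := div_ne_zero (by linarith) hden
    fun_prop (disch := assumption)
  have hval : (1 - (2 - α)) / (1 - α) * log ((1 - (2 - α)) / (α - (2 - α))) = log 2 := by
    rw [div_mul_log_div_eq_mul_log_one_add_inv h1.ne' (by linarith),
      show 1 - (2 - α) = α - 1 by ring, div_self hα.ne']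
    norm_num
  have htends : Tendsto (fun θ : ℝ => (1 - θ) / (1 - α) * log ((1 - θ) / (α - θ)))
      (𝓝[>] (2 - α)) (𝓝 (log 2)) := hval ▸ hcont.continuousWithinAt.tendsto
  exact ⟨hlt, csSup_image_eq_of_forall_le_of_tendsto (Ioo_mem_nhdsGT (by linarith))
    (fun θ hθ => (hlt θ hθ).le) htends, htends⟩

theorem xi_sup_ln_two (α : ℝ) (h1 : 1 < α) (h2 : α < 2) :
    (∀ θ ∈ Set.Ioo (2 - α) 1,
        ((1 - θ) / (1 - α)) * Real.log ((1 - θ) / (α - θ)) < Real.log 2) ∧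
    sSup ((fun θ : ℝ => ((1 - θ) / (1 - α)) * Real.log ((1 - θ) / (α - θ))) ''
        Set.Ioo (2 - α) 1) = Real.log 2 ∧
    Filter.Tendsto (fun θ : ℝ => ((1 - θ) / (1 - α)) * Real.log ((1 - θ) / (α - θ)))
      (nhdsWithin (2 - α) (Set.Ioi (2 - α))) (nhds (Real.log 2)) :=
  xi_sup_ln_two_general α h1
end

section
/- Let ħ > 0 and let ν : ℝ^{2d} → ℝ be measurable with 0 ≤ ν ≤ 1 a.e., ∫ ν = (πħ)^d, and suppose that for every 1 < q < 2 and every θ ∈ (2−q, 1) we have ∫ ν^q ≤ (πħ)^d · ((1−θ)/(q−θ))^{d(1−θ)}. Then −∫ ν ln ν ≥ (πħ)^d · d · ln 2. -/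
/-!
The Rényi-type bounds on `∫ ν ^ q` control the entropy: for `0 ≤ x` and `σ ≥ 0`,
`(x - x ^ (1 + σ)) / σ ≤ -x log x`, so
`-∫ ν log ν ≥ ((πħ)^d - ∫ ν ^ (1 + σ)) / σ ≥ (πħ)^d (1 - (2 + ε)^(-dε)) / (ε (1 + ε))`
with `σ = ε + ε²`, `q = 1 + σ`, `θ = 1 - ε`, for which `(1 - θ)/(q - θ) = 1/(2 + ε)`.
As `ε → 0⁺` the right-hand side tends to `(πħ)^d d log 2`, the derivative of
`ε ↦ -(2 + ε)^(-dε)` at `0`.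
-/

open MeasureTheory Real Filter Topology Set

namespace Real

lemma sub_rpow_one_add_le_mul_negMulLog {x σ : ℝ} (hx : 0 ≤ x) (hσ : 0 ≤ σ) :
    x - x ^ (1 + σ) ≤ σ * negMulLog x := by
  rcases hx.eq_or_lt with rfl | hx
  · simp [zero_rpow (by positivity : (1 : ℝ) + σ ≠ 0)]
  have hlog : σ * log x ≤ x ^ σ - 1 := by
    rw [← log_rpow hx]
    exact log_le_sub_one_of_pos (rpow_pos_of_pos hx σ)
  rw [rpow_add hx, rpow_one, negMulLog]
  nlinarith

lemma hasDerivAt_inv_add_rpow_mul {a : ℝ} (ha : 0 < a) (c : ℝ) :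
    HasDerivAt (fun ε => (a + ε)⁻¹ ^ (c * ε)) (-(c * log a)) 0 := by
  have hbase := ((hasDerivAt_id (0 : ℝ)).const_add a).inv (by simpa using ha.ne')
  convert hbase.rpow ((hasDerivAt_id (0 : ℝ)).const_mul c) (by simpa using ha) using 1
  · rfl
  · simp only [id, mul_zero, zero_mul, rpow_zero, zero_add, add_zero, Pi.inv_apply, mul_one,
      log_inv, mul_neg]

lemma tendsto_one_sub_inv_add_rpow_mul_div {a : ℝ} (ha : 0 < a) (c : ℝ) :
    Tendsto (fun ε => (1 - (a + ε)⁻¹ ^ (c * ε)) / (ε * (1 + ε))) (𝓝[>] 0)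
      (𝓝 (c * log a)) := by
  have hslope := (hasDerivAt_iff_tendsto_slope.mp (hasDerivAt_inv_add_rpow_mul ha c)).neg
  have hinv : Tendsto (fun ε : ℝ => (1 + ε)⁻¹) (𝓝[>] 0) (𝓝 1) := by
    simpa using ((continuous_const.add continuous_id).tendsto (0 : ℝ)).inv₀
      (by norm_num : (1 : ℝ) + 0 ≠ 0) |>.mono_left nhdsWithin_le_nhds
  have hprod := (hslope.mono_left (nhdsWithin_mono 0 fun x hx => ne_of_gt hx)).mul hinv
  rw [neg_neg, mul_one] at hprod
  refine hprod.congr' (eventually_nhdsWithin_of_forall fun ε hε => ?_)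
  have hε : ε ≠ 0 := ne_of_gt hε
  simp only [slope_def_field, sub_zero, mul_zero, rpow_zero]
  field_simp
  ring

end Real

section

variable {α : Type*} [MeasurableSpace α] {μ : Measure α} {ν : α → ℝ}

lemma MeasureTheory.Integrable.rpow_of_le_one (hν : Integrable ν μ)
    (h01 : ∀ᵐ z ∂μ, 0 ≤ ν z ∧ ν z ≤ 1) {q : ℝ} (hq : 1 ≤ q) :
    Integrable (fun z => ν z ^ q) μ := by
  refine hν.mono' ((continuous_rpow_const (by linarith)).comp_aestronglyMeasurable
    hν.aestronglyMeasurable) ?_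
  filter_upwards [h01] with z ⟨hz0, hz1⟩
  rw [norm_of_nonneg (rpow_nonneg hz0 q)]
  exact rpow_le_self_of_le_one hz0 hz1 hq

lemma ofReal_le_lintegral_negMulLog_of_integral_rpow_le (hν : Integrable ν μ)
    (h01 : ∀ᵐ z ∂μ, 0 ≤ ν z ∧ ν z ≤ 1) {C r σ : ℝ} (hσ : 0 < σ) (hνC : ∫ z, ν z ∂μ = C)
    (hrpow : ∫ z, ν z ^ (1 + σ) ∂μ ≤ C * r) :
    ENNReal.ofReal (C * (1 - r) / σ) ≤ ∫⁻ z, ENNReal.ofReal (negMulLog (ν z)) ∂μ := by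
  have hint : Integrable (fun z => (ν z - ν z ^ (1 + σ)) / σ) μ :=
    (hν.sub (hν.rpow_of_le_one h01 (by linarith))).div_const σ
  have hnonneg : 0 ≤ᵐ[μ] fun z => (ν z - ν z ^ (1 + σ)) / σ := by
    filter_upwards [h01] with z ⟨hz0, hz1⟩
    exact div_nonneg (sub_nonneg.2 (rpow_le_self_of_le_one hz0 hz1 (by linarith))) hσ.le
  calc ENNReal.ofReal (C * (1 - r) / σ)
      ≤ ENNReal.ofReal (∫ z, (ν z - ν z ^ (1 + σ)) / σ ∂μ) := by
        refine ENNReal.ofReal_le_ofReal ?_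
        rw [integral_div, integral_sub hν (hν.rpow_of_le_one h01 (by linarith)), hνC]
        gcongr
        linarith
    _ = ∫⁻ z, ENNReal.ofReal ((ν z - ν z ^ (1 + σ)) / σ) ∂μ :=
        ofReal_integral_eq_lintegral_ofReal hint hnonneg
    _ ≤ ∫⁻ z, ENNReal.ofReal (negMulLog (ν z)) ∂μ := by
        refine lintegral_mono_ae ?_
        filter_upwards [h01] with z hz
        refine ENNReal.ofReal_le_ofReal ((div_le_iff₀' hσ).2 ?_)
        exact sub_rpow_one_add_le_mul_negMulLog hz.1 hσ.le

end

theorem entropy_lower_bound_general {d : ℕ} (hbar : ℝ)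
    (ν : (Fin (2 * d) → ℝ) → ℝ)
    (hν01 : ∀ᵐ z, 0 ≤ ν z ∧ ν z ≤ 1)
    (hν1 : MeasureTheory.Integrable ν volume)
    (hνint : ∫ z, ν z = (π * hbar) ^ d)
    (hq : ∀ q θ : ℝ, 1 < q → q < 2 → 2 - q < θ → θ < 1 →
      (∫ z, ν z ^ q) ≤ (π * hbar) ^ d * ((1 - θ) / (q - θ)) ^ ((d : ℝ) * (1 - θ))) :
    ENNReal.ofReal ((π * hbar) ^ d * d * Real.log 2) ≤
      ∫⁻ z, ENNReal.ofReal (-(ν z * Real.log (ν z))) := by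
  set C := (π * hbar) ^ d
  have hbound : ∀ᶠ ε in 𝓝[>] 0, ENNReal.ofReal
      (C * ((1 - (2 + ε)⁻¹ ^ ((d : ℝ) * ε)) / (ε * (1 + ε)))) ≤
        ∫⁻ z, ENNReal.ofReal (negMulLog (ν z)) := by
    filter_upwards [Ioo_mem_nhdsGT (by norm_num : (0 : ℝ) < 1 / 2)] with ε ⟨hε0, hε1⟩
    have hrenyi := hq (1 + ε * (1 + ε)) (1 - ε) (by nlinarith) (by nlinarith) (by nlinarith)
      (by linarith)
    have hratio : (1 - (1 - ε)) / (1 + ε * (1 + ε) - (1 - ε)) = (2 + ε)⁻¹ := by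
      rw [sub_sub_cancel, show 1 + ε * (1 + ε) - (1 - ε) = ε * (2 + ε) by ring,
        div_mul_cancel_left₀ hε0.ne']
    rw [hratio, sub_sub_cancel] at hrenyi
    rw [← mul_div_assoc]
    exact ofReal_le_lintegral_negMulLog_of_integral_rpow_le hν1 hν01 (by positivity) hνint
      hrenyi
  have hlim := ENNReal.tendsto_ofReal
    ((tendsto_one_sub_inv_add_rpow_mul_div two_pos (d : ℝ)).const_mul C)
  rw [← mul_assoc] at hlim
  simpa only [negMulLog_eq_neg] using le_of_tendsto hlim hbound

theorem entropy_lower_bound {d : ℕ} (hbar : ℝ) (hhbar : 0 < hbar)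
    (ν : (Fin (2 * d) → ℝ) → ℝ) (hνm : Measurable ν)
    (hν01 : ∀ᵐ z, 0 ≤ ν z ∧ ν z ≤ 1)
    (hν1 : MeasureTheory.Integrable ν volume)
    (hνint : ∫ z, ν z = (π * hbar) ^ d)
    (hq : ∀ q θ : ℝ, 1 < q → q < 2 → 2 - q < θ → θ < 1 →
      (∫ z, ν z ^ q) ≤ (π * hbar) ^ d * ((1 - θ) / (q - θ)) ^ ((d : ℝ) * (1 - θ))) :
    ENNReal.ofReal ((π * hbar) ^ d * d * Real.log 2) ≤
      ∫⁻ z, ENNReal.ofReal (-(ν z * Real.log (ν z))) :=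
  entropy_lower_bound_general hbar ν hν01 hν1 hνint hq
end
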